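/- arXiv:2507.08714 — 4 statements merged into one kernel-verified Lean document; each statement's English description precedes it below -/
import Mathlib

section
/- For g ≥ 2, a seed α ∈ 𝒜_g, integers L ≥ 0, j ≥ 0, a real x with 1 ≤ x ≤ g^L, and β ∈ ℝ, we have |Σ_{0≤n<x} e(f_L^{[j]}(n) − βn)| ≤ (g−1) Σ_{0≤λ≤ log⌈x⌉/log g} |Σ_{0≤n<g^λ} e(f_λ^{[j]}(n) − βn)|, where e(t) = exp(2πit). -/
/-- The `i`-th base-`g` digit of `n`. -/
noncomputable def eps (g n i : ℕ) : ℕ := n / g ^ i % g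

/-- The weakly digital function `f_λ^{[j]}` generated by the seed `α`. -/
noncomputable def wdf (g : ℕ) (α : ℕ → ℕ → ℝ) (lam j n : ℕ) : ℝ :=
  ∑ i ∈ Finset.range lam, α (i + j) (eps g n i)

/-- `e(t) = exp(2πit)`. -/
noncomputable def eC (t : ℝ) : ℂ := Complex.exp (2 * (Real.pi : ℂ) * Complex.I * (t : ℂ))

/-!
Write `S_L^{[j]}(β, N) = ∑_{n<N} e(f_L^{[j]}(n) - βn)`. Peeling off the last digit,
`f_{L+1}^{[j]}(qg + r) = α_j(r) + f_L^{[j+1]}(q)`, so for `N = qg + s` with `s < g`,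
`S_{L+1}^{[j]}(β, N) = c · S_L^{[j+1]}(gβ, q)` plus `s` unimodular terms, with
`c = ∑_{r<g} e(α_j(r) - βr)`, while for full blocks `S_{λ+1}^{[j]}(β, g^{λ+1}) = c · S_λ^{[j+1]}(gβ, g^λ)` exactly. Induction on `L` gives
`|S_L^{[j]}(β, N)| ≤ ∑_λ ε_λ(N) |S_λ^{[j]}(β, g^λ)|`, and each digit is at most `g - 1` and vanishes
beyond `⌊log N / log g⌋`.
-/

open Finset

lemma eC_add (s t : ℝ) : eC (s + t) = eC s * eC t := by
  simp only [eC, ← Complex.exp_add]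
  push_cast
  ring_nf

lemma norm_eC (t : ℝ) : ‖eC t‖ = 1 := by
  simp [eC, Complex.norm_exp]

lemma norm_sum_eC_le {ι : Type*} (s : Finset ι) (f : ι → ℝ) : ‖∑ i ∈ s, eC (f i)‖ ≤ #s := by
  simpa [norm_eC] using norm_sum_le s (fun i => eC (f i))

lemma eps_zero_right (g n : ℕ) : eps g n 0 = n % g := by
  simp [eps]

lemma eps_succ (g n i : ℕ) : eps g n (i + 1) = eps g (n / g) i := by
  simp only [eps, pow_succ', Nat.div_div_eq_div_mul]

lemma eps_lt {g : ℕ} (hg : 0 < g) (n i : ℕ) : eps g n i < g :=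
  Nat.mod_lt _ hg

lemma eps_eq_zero_of_lt_pow {g n i : ℕ} (h : n < g ^ i) : eps g n i = 0 := by
  simp [eps, Nat.div_eq_of_lt h]

lemma wdf_succ (g : ℕ) (α : ℕ → ℕ → ℝ) (L j n : ℕ) :
    wdf g α (L + 1) j n = α j (n % g) + wdf g α L (j + 1) (n / g) := by
  simp only [wdf, sum_range_succ', eps_succ, eps_zero_right, add_zero, add_comm, add_left_comm]

noncomputable def wdfExpSum (g : ℕ) (α : ℕ → ℕ → ℝ) (L j : ℕ) (β : ℝ) (N : ℕ) : ℂ :=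
  ∑ n ∈ range N, eC (wdf g α L j n - β * n)

noncomputable def digitExpSum (g : ℕ) (α : ℕ → ℕ → ℝ) (j : ℕ) (β : ℝ) : ℂ :=
  ∑ r ∈ range g, eC (α j r - β * r)

section

variable {g : ℕ} (α : ℕ → ℕ → ℝ) (L j : ℕ) (β : ℝ)

lemma eC_wdf_succ_mul_add {q r : ℕ} (hr : r < g) :
    eC (wdf g α (L + 1) j (q * g + r) - β * (q * g + r : ℕ)) =
      eC (α j r - β * r) * eC (wdf g α L (j + 1) q - (β * g) * q) := by
  have hg : 0 < g := by omega
  have hdiv : (q * g + r) / g = q := by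
    rw [mul_comm, Nat.mul_add_div hg, Nat.div_eq_of_lt hr, add_zero]
  rw [← eC_add, wdf_succ, hdiv, Nat.mul_add_mod_self_right, Nat.mod_eq_of_lt hr]
  push_cast
  ring_nf

lemma wdfExpSum_succ_mul (q : ℕ) :
    wdfExpSum g α (L + 1) j β (q * g) =
      digitExpSum g α j β * wdfExpSum g α L (j + 1) (β * g) q := by
  induction q with
  | zero => simp [wdfExpSum]
  | succ q ih =>
    have hblock := sum_congr rfl fun r (hr : r ∈ range g) =>
      eC_wdf_succ_mul_add α L j β (q := q) (mem_range.mp hr)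
    rw [wdfExpSum, Nat.succ_mul, sum_range_add, ← wdfExpSum, ih, hblock, ← sum_mul,
      wdfExpSum, wdfExpSum, sum_range_succ, mul_add]
    rfl

lemma norm_wdfExpSum_succ_le (N : ℕ) :
    ‖wdfExpSum g α (L + 1) j β N‖ ≤
      ‖digitExpSum g α j β‖ * ‖wdfExpSum g α L (j + 1) (β * g) (N / g)‖ + (N % g : ℕ) := by
  have hsplit : wdfExpSum g α (L + 1) j β N =
      wdfExpSum g α (L + 1) j β (N / g * g) +
        ∑ r ∈ range (N % g), eC (wdf g α (L + 1) j (N / g * g + r) - β * (N / g * g + r : ℕ)) := by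
    conv_lhs => rw [← Nat.div_add_mod' N g]
    simp only [wdfExpSum, sum_range_add, Nat.cast_add]
  rw [hsplit, wdfExpSum_succ_mul α L j β, ← norm_mul]
  refine (norm_add_le _ _).trans (add_le_add le_rfl ?_)
  exact (norm_sum_eC_le _ _).trans_eq (by simp)

lemma norm_wdfExpSum_pow_succ :
    ‖wdfExpSum g α (L + 1) j β (g ^ (L + 1))‖ =
      ‖digitExpSum g α j β‖ * ‖wdfExpSum g α L (j + 1) (β * g) (g ^ L)‖ := by
  rw [pow_succ, wdfExpSum_succ_mul α L j β, norm_mul]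

end

lemma norm_wdfExpSum_le_sum_eps {g : ℕ} (hg : 2 ≤ g) (α : ℕ → ℕ → ℝ) (L j : ℕ) (β : ℝ)
    {N : ℕ} (hN : N ≤ g ^ L) :
    ‖wdfExpSum g α L j β N‖ ≤
        ∑ lam ∈ range (L + 1), (eps g N lam : ℝ) * ‖wdfExpSum g α lam j β (g ^ lam)‖ := by
  have hg0 : 0 < g := by omega
  induction L generalizing j β N with
  | zero =>
    rw [pow_zero] at hN
    interval_cases N <;> simp [wdfExpSum, eps, wdf, Nat.mod_eq_of_lt (by omega : 1 < g)]
  | succ L ih =>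
    have hq : N / g ≤ g ^ L := by
      rw [pow_succ] at hN
      exact (Nat.div_le_div_right hN).trans_eq (Nat.mul_div_cancel _ hg0)
    have hblocks : ∀ lam ∈ range (L + 1),
        (eps g N (lam + 1) : ℝ) * ‖wdfExpSum g α (lam + 1) j β (g ^ (lam + 1))‖ =
          ‖digitExpSum g α j β‖ *
            ((eps g (N / g) lam : ℝ) * ‖wdfExpSum g α lam (j + 1) (β * g) (g ^ lam)‖) := by
      intro lam _
      rw [eps_succ, norm_wdfExpSum_pow_succ α lam j β]
      ring
    rw [sum_range_succ', sum_congr rfl hblocks, ← mul_sum]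
    calc ‖wdfExpSum g α (L + 1) j β N‖
        ≤ ‖digitExpSum g α j β‖ * ‖wdfExpSum g α L (j + 1) (β * g) (N / g)‖ + (N % g : ℕ) :=
          norm_wdfExpSum_succ_le α L j β N
      _ ≤ _ := by
          gcongr
          · exact ih (j + 1) (β * g) hq
          · simp [wdfExpSum, wdf, eps_zero_right, norm_eC]

theorem sum_cleanup_general (g : ℕ) (hg : 2 ≤ g) (α : ℕ → ℕ → ℝ) (L j : ℕ) (x : ℝ) (β : ℝ)
    (hxL : x ≤ (g : ℝ) ^ L) :
    ‖∑ n ∈ Finset.range ⌈x⌉₊, eC (wdf g α L j n - β * n)‖ ≤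
      (g - 1 : ℝ) *
        ∑ lam ∈ Finset.range (⌊Real.log (⌈x⌉₊ : ℝ) / Real.log g⌋₊ + 1),
          ‖∑ n ∈ Finset.range (g ^ lam), eC (wdf g α lam j n - β * n)‖ := by
  set N := ⌈x⌉₊
  have hNL : N ≤ g ^ L := Nat.ceil_le.mpr (by exact_mod_cast hxL)
  rw [Real.log_div_log, Real.natFloor_logb_natCast, mul_sum]
  have hlogL : Nat.log g N ≤ L := by
    simpa [Nat.log_pow (by omega : 1 < g)] using Nat.log_mono_right (b := g) hNL
  have hdigits_vanish : ∀ lam ∈ range (L + 1), lam ∉ range (Nat.log g N + 1) →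
      (eps g N lam : ℝ) * ‖wdfExpSum g α lam j β (g ^ lam)‖ = 0 := by
    intro lam _ hlam
    rw [eps_eq_zero_of_lt_pow ((Nat.lt_pow_succ_log_self (by omega) N).trans_le
      (Nat.pow_le_pow_right (by omega) (by simpa using hlam))), Nat.cast_zero, zero_mul]
  calc ‖wdfExpSum g α L j β N‖
      ≤ ∑ lam ∈ range (L + 1), (eps g N lam : ℝ) * ‖wdfExpSum g α lam j β (g ^ lam)‖ :=
        norm_wdfExpSum_le_sum_eps hg α L j β hNL
    _ = ∑ lam ∈ range (Nat.log g N + 1), (eps g N lam : ℝ) * ‖wdfExpSum g α lam j β (g ^ lam)‖ :=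
        (sum_subset (range_subset_range.mpr (by omega)) hdigits_vanish).symm
    _ ≤ ∑ lam ∈ range (Nat.log g N + 1), (g - 1 : ℝ) * ‖wdfExpSum g α lam j β (g ^ lam)‖ := by
        gcongr with lam
        exact le_sub_iff_add_le.mpr (by exact_mod_cast eps_lt (by omega) N lam)

theorem sum_cleanup (g : ℕ) (hg : 2 ≤ g) (α : ℕ → ℕ → ℝ) (L j : ℕ) (x : ℝ) (β : ℝ)
    (hx : 1 ≤ x) (hxL : x ≤ (g : ℝ) ^ L) :
    ‖∑ n ∈ Finset.range ⌈x⌉₊, eC (wdf g α L j n - β * n)‖ ≤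
      (g - 1 : ℝ) *
        ∑ lam ∈ Finset.range (⌊Real.log (⌈x⌉₊ : ℝ) / Real.log g⌋₊ + 1),
          ‖∑ n ∈ Finset.range (g ^ lam), eC (wdf g α lam j n - β * n)‖ :=
  sum_cleanup_general g hg α L j x β hxL
end

section
/- For every g ∈ ℤ with g ≥ 2, the exponent η_g := max(1/2 − log(3/2)/(4 log g − 2 log 2), 1/2 + log(1−Θ_g)/(4 log g)) satisfies 0.2075187 < η_g < 1/2 − 1/(4g³ log g), given that 0 < Θ_g ≤ (1−1/g){1 − (1 − 2/(g²(g−1)))^{1/2}} holds with Θ_g > 1/g³. -/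
/-!
Write `L = log g`. Since `L ≥ log 2`, the first term of the max is at least
`1/2 - log (3/2) / (2 log 2) = 1 - (log₂ 3)/2 > 0.2075187`. It also stays below
`1/2 - 1/(4 g³ L)`, because `log (3/2) ≥ 1/3` is much larger than `1/g³ ≤ 1/8`.
The second term is below it because `log (1 - Θ) ≤ -Θ < -1/g³`.
-/

open Real

lemma three_pow_lt_two_pow : (3 : ℕ) ^ 15601 < 2 ^ 24727 := by
  decide +kernel

-- `24727 / 15601` is the first continued-fraction convergent of `log₂ 3` from above that is
-- accurate enough for the constant `0.2075187`.
lemma log_three_halves_lt : log (3 / 2) < 9126 / 15601 * log 2 := by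
  have hpow : ((3 : ℝ) / 2) ^ 15601 < 2 ^ 9126 := by
    rw [div_pow, div_lt_iff₀ (by positivity), ← pow_add]
    simpa only [Nat.cast_pow, Nat.cast_ofNat] using
      Nat.cast_lt (α := ℝ) |>.mpr three_pow_lt_two_pow
  have hlog := log_lt_log (by positivity) hpow
  rw [log_pow, log_pow] at hlog
  push_cast at hlog
  linarith

lemma one_third_le_log_three_halves : (1 : ℝ) / 3 ≤ log (3 / 2) := by
  have h := one_sub_inv_le_log_of_pos (by norm_num : (0 : ℝ) < 3 / 2)
  norm_num at h ⊢
  linarith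

section

variable {x : ℝ}

lemma lt_half_sub_log_three_halves_div (hx : 2 ≤ x) :
    0.2075187 < 1 / 2 - log (3 / 2) / (4 * log x - 2 * log 2) := by
  have hlog2 : 0 < log 2 := log_pos (by norm_num)
  have hlogx : log 2 ≤ log x := log_le_log (by norm_num) hx
  have hdiv : log (3 / 2) / (4 * log x - 2 * log 2) ≤ log (3 / 2) / (2 * log 2) :=
    div_le_div_of_nonneg_left (log_pos (by norm_num)).le (by positivity) (by linarith)
  have hlt : log (3 / 2) / (2 * log 2) < 0.2924813 := by
    rw [div_lt_iff₀ (by positivity)]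
    linarith [log_three_halves_lt]
  norm_num at hdiv hlt ⊢
  linarith

lemma one_div_lt_log_three_halves_div (hx : 2 ≤ x) :
    1 / (4 * x ^ 3 * log x) < log (3 / 2) / (4 * log x - 2 * log 2) := by
  have hlog2 : 0 < log 2 := log_pos (by norm_num)
  have hlogx : log 2 ≤ log x := log_le_log (by norm_num) hx
  have hL : 0 < log x := hlog2.trans_le hlogx
  have hx3 : (8 : ℝ) ≤ x ^ 3 := by
    calc (8 : ℝ) = 2 ^ 3 := by norm_num
      _ ≤ x ^ 3 := by gcongr
  calc 1 / (4 * x ^ 3 * log x) ≤ 1 / (4 * 8 * log x) := by gcongr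
    _ < 1 / 3 / (4 * log x) := by
      rw [div_div]
      exact one_div_lt_one_div_of_lt (by positivity) (by linarith)
    _ ≤ log (3 / 2) / (4 * log x) := by
      gcongr
      exact one_third_le_log_three_halves
    _ < log (3 / 2) / (4 * log x - 2 * log 2) := by
      have h32 : 0 < log (3 / 2) := log_pos (by norm_num)
      gcongr <;> linarith

lemma log_one_sub_div_lt {Θ : ℝ} (hx : 1 < x) (hΘ1 : 1 / x ^ 3 < Θ) (hΘ2 : Θ < 1) :
    log (1 - Θ) / (4 * log x) < -(1 / (4 * x ^ 3 * log x)) := by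
  have hL : 0 < log x := log_pos hx
  have hlog : log (1 - Θ) < -(1 / x ^ 3) := by
    linarith [log_le_sub_one_of_pos (by linarith : 0 < 1 - Θ)]
  calc log (1 - Θ) / (4 * log x) < -(1 / x ^ 3) / (4 * log x) := by gcongr
    _ = -(1 / (4 * x ^ 3 * log x)) := by field_simp

end

theorem eta_bound (g : ℕ) (hg : 2 ≤ g) (Θ : ℝ) (hΘ1 : 1 / (g : ℝ) ^ 3 < Θ) (hΘ2 : Θ < 1) :
    0.2075187 < max (1 / 2 - Real.log (3 / 2) / (4 * Real.log g - 2 * Real.log 2))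
        (1 / 2 + Real.log (1 - Θ) / (4 * Real.log g)) ∧
      max (1 / 2 - Real.log (3 / 2) / (4 * Real.log g - 2 * Real.log 2))
        (1 / 2 + Real.log (1 - Θ) / (4 * Real.log g)) <
        1 / 2 - 1 / (4 * (g : ℝ) ^ 3 * Real.log g) := by
  have hx : (2 : ℝ) ≤ g := by exact_mod_cast hg
  refine ⟨(lt_half_sub_log_three_halves_div hx).trans_le (le_max_left _ _), max_lt ?_ ?_⟩
  · linarith [one_div_lt_log_three_halves_div hx]
  · linarith [log_one_sub_div_lt (by linarith) hΘ1 hΘ2]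
end

section
/- For g ≥ 2, a seed α ∈ 𝒜_g, λ, j ∈ ℤ_{≥0}, and any β ∈ ℝ, |F_λ^{[j]}(β)| ≤ C_g · g^{−σ_λ^{[j]}(α)}, where σ_λ^{[j]}(α) := Σ_{0≤i<λ} γ_i^{[j]}(α), γ_i^{[j]}(α) := (2 log 2)/((g−1)g⁴(log g)²) · Σ_{0≤m<n<g} ‖(g α_{i+j}(m) − α_{i+j+1}(m)) − (g α_{i+j}(n) − α_{i+j+1}(n))‖², and C_g is a constant depending only on g (one may take C_g = g^{1/20}). -/
/-- The normalized exponential sum `F_λ^{[j]}(β)`. -/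
noncomputable def F (g : ℕ) (α : ℕ → ℕ → ℝ) (lam j : ℕ) (β : ℝ) : ℂ :=
  ((g : ℂ) ^ lam)⁻¹ * ∑ n ∈ Finset.range (g ^ lam), eC (wdf g α lam j n - β * n)

/-- Distance from `x` to the nearest integer. -/
noncomputable def nint (x : ℝ) : ℝ := |x - round x|

/-- The quantity `γ_i^{[j]}(α)`. -/
noncomputable def gam (g : ℕ) (α : ℕ → ℕ → ℝ) (i j : ℕ) : ℝ :=
  (2 * Real.log 2) / (((g : ℝ) - 1) * (g : ℝ) ^ 4 * (Real.log g) ^ 2) *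
    ∑ n ∈ Finset.range g, ∑ m ∈ Finset.range n,
      nint (((g : ℝ) * α (i + j) m - α (i + j + 1) m) -
        ((g : ℝ) * α (i + j) n - α (i + j + 1) n)) ^ 2

/-- The quantity `σ_λ^{[j]}(α)`. -/
noncomputable def sig (g : ℕ) (α : ℕ → ℕ → ℝ) (lam j : ℕ) : ℝ :=
  ∑ i ∈ Finset.range lam, gam g α i j

/-!
Writing `n` through its digits, `F_λ^{[j]}(β)` factors as `∏_{i<λ} g⁻¹ ∑_{d<g} e(φ_i(d))` with
`φ_i(d) = α_{i+j}(d) - β gⁱ d`. Expanding `|∑_d e(φ_i(d))|²` and using `cos 2πt ≤ 1 - 8‖t‖²`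
bounds the `i`-th factor by `exp (-8 S_i / g²)`, where `S_i = ∑_{m<n} ‖φ_i(m) - φ_i(n)‖²`.
Since `g φ_i - φ_{i+1} = g α_{i+j} - α_{i+j+1}` does not depend on `β`, the triangle inequality
for `‖·‖` bounds `γ_i` by a multiple of `S_i + S_{i+1}`. Hence `σ_λ^{[j]}(α)` is controlled by
`∑ S_i`, except for the last term `γ_{λ-1} ≤ 1/20`, which is where the factor `g^{1/20}` comes from.
-/

open Finset Real

section NearestIntegerDistance

lemma nint_eq_norm (x : ℝ) : nint x = ‖(x : UnitAddCircle)‖ := UnitAddCircle.norm_eq.symm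

lemma nint_nonneg (x : ℝ) : 0 ≤ nint x := abs_nonneg _

lemma nint_zero : nint 0 = 0 := by simp [nint]

lemma nint_sub_comm (x y : ℝ) : nint (x - y) = nint (y - x) := by
  rw [nint_eq_norm, nint_eq_norm, AddCircle.coe_sub, AddCircle.coe_sub, norm_sub_rev]

lemma nint_natCast_mul_sub_le (k : ℕ) (u v : ℝ) : nint (k * u - v) ≤ k * nint u + nint v := by
  rw [← nsmul_eq_mul, nint_eq_norm, nint_eq_norm, nint_eq_norm, AddCircle.coe_sub,
    AddCircle.coe_nsmul]
  exact (norm_sub_le _ _).trans (add_le_add_left norm_nsmul_le _)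

lemma nint_sq_natCast_mul_sub_le {k : ℕ} (hk : 1 ≤ k) (u v : ℝ) :
    nint (k * u - v) ^ 2 ≤ 2 * k ^ 2 * (nint u ^ 2 + nint v ^ 2) := by
  have hk' : (1 : ℝ) ≤ k := by exact_mod_cast hk
  have h := pow_le_pow_left₀ (nint_nonneg _) (nint_natCast_mul_sub_le k u v) 2
  have hk2 : (1 : ℝ) ≤ k ^ 2 := one_le_pow₀ hk'
  nlinarith [sq_nonneg (k * nint u - nint v), mul_le_mul_of_nonneg_right hk2 (sq_nonneg (nint v))]

lemma cos_two_pi_mul_le (t : ℝ) : cos (2 * π * t) ≤ 1 - 8 * nint t ^ 2 := by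
  have hu : |2 * π * (t - round t)| ≤ π := by
    rw [abs_mul, abs_of_pos two_pi_pos]
    nlinarith [abs_sub_round t, pi_pos]
  have hper : 2 * π * t = 2 * π * (t - round t) + (round t : ℤ) * (2 * π) := by ring
  calc cos (2 * π * t) = cos (2 * π * (t - round t)) := by rw [hper, cos_add_int_mul_two_pi]
    _ ≤ 1 - 2 / π ^ 2 * (2 * π * (t - round t)) ^ 2 := cos_le_one_sub_mul_cos_sq hu
    _ = 1 - 8 * nint t ^ 2 := by
      rw [nint, sq_abs]
      field_simp
      ring

end NearestIntegerDistance

section Spread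

noncomputable def spread (g : ℕ) (x : ℕ → ℝ) : ℝ :=
  ∑ n ∈ range g, ∑ m ∈ range n, nint (x m - x n) ^ 2

lemma spread_nonneg (g : ℕ) (x : ℕ → ℝ) : 0 ≤ spread g x :=
  sum_nonneg fun _ _ => sum_nonneg fun _ _ => sq_nonneg _

lemma spread_le (g : ℕ) (x : ℕ → ℝ) : spread g x ≤ g * (g - 1) / 8 := by
  have hpairs : ∑ n ∈ range g, (n : ℝ) = g * (g - 1) / 2 := by
    induction g with
    | zero => simp
    | succ g ih => rw [sum_range_succ, ih]; push_cast; ring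
  calc spread g x ≤ ∑ n ∈ range g, ∑ _m ∈ range n, (1 / 2 : ℝ) ^ 2 := by
        refine sum_le_sum fun n _ => sum_le_sum fun m _ => ?_
        exact pow_le_pow_left₀ (nint_nonneg _) (abs_sub_round _) 2
    _ = g * (g - 1) / 8 := by
        simp only [sum_const, card_range, nsmul_eq_mul, ← sum_mul, hpairs]
        ring

lemma spread_natCast_mul_sub_le (g : ℕ) {k : ℕ} (hk : 1 ≤ k) (x y : ℕ → ℝ) :
    spread g (fun d => k * x d - y d) ≤ 2 * k ^ 2 * (spread g x + spread g y) := by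
  calc spread g (fun d => k * x d - y d)
      ≤ ∑ n ∈ range g, ∑ m ∈ range n,
          2 * k ^ 2 * (nint (x m - x n) ^ 2 + nint (y m - y n) ^ 2) := by
        refine sum_le_sum fun n _ => sum_le_sum fun m _ => ?_
        rw [show k * x m - y m - (k * x n - y n) = k * (x m - x n) - (y m - y n) by ring]
        exact nint_sq_natCast_mul_sub_le hk _ _
    _ = 2 * k ^ 2 * (spread g x + spread g y) := by
        simp only [spread, mul_add, sum_add_distrib, mul_sum]

lemma sum_sum_eq_two_mul_sum_sum_lt {M : Type*} [AddCommMonoid M] (f : ℕ → ℕ → M)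
    (hsymm : ∀ m n, f m n = f n m) (hdiag : ∀ m, f m m = 0) (N : ℕ) :
    ∑ m ∈ range N, ∑ n ∈ range N, f m n = 2 • ∑ n ∈ range N, ∑ m ∈ range n, f m n := by
  induction N with
  | zero => simp
  | succ N ih =>
    simp only [sum_range_succ, sum_add_distrib, hdiag, add_zero, ih, smul_add, two_nsmul]
    simp only [hsymm N]
    abel

lemma sum_sum_nint_sq_eq_two_mul_spread (g : ℕ) (x : ℕ → ℝ) :
    ∑ m ∈ range g, ∑ n ∈ range g, nint (x m - x n) ^ 2 = 2 * spread g x := by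
  rw [sum_sum_eq_two_mul_sum_sum_lt _ (fun m n => by rw [nint_sub_comm]) (fun m => by
    rw [sub_self, nint_zero, sq, zero_mul]), nsmul_eq_mul, spread, Nat.cast_ofNat]

end Spread

section ExponentialSums

lemma eC_eq_exp (x : ℝ) : eC x = Complex.exp (↑(2 * π * x) * Complex.I) := by
  rw [eC]; push_cast; ring_nf

lemma eC_sum {ι : Type*} (s : Finset ι) (x : ι → ℝ) : eC (∑ i ∈ s, x i) = ∏ i ∈ s, eC (x i) := by
  simp only [eC, ← Complex.exp_sum, Complex.ofReal_sum, mul_sum]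

lemma eC_mul_conj (x y : ℝ) : eC x * (starRingEnd ℂ) (eC y) = eC (x - y) := by
  rw [eC_eq_exp, eC_eq_exp, eC_eq_exp, ← Complex.exp_conj, ← Complex.exp_add, map_mul,
    Complex.conj_ofReal, Complex.conj_I]
  push_cast
  ring_nf

lemma norm_sq_sum_eC {ι : Type*} (s : Finset ι) (x : ι → ℝ) :
    ‖∑ d ∈ s, eC (x d)‖ ^ 2 = ∑ m ∈ s, ∑ n ∈ s, cos (2 * π * (x m - x n)) := by
  have hconj : ((‖∑ d ∈ s, eC (x d)‖ ^ 2 : ℝ) : ℂ)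
      = (∑ d ∈ s, eC (x d)) * (starRingEnd ℂ) (∑ d ∈ s, eC (x d)) := by
    rw [Complex.mul_conj, Complex.normSq_eq_norm_sq]
  rw [← Complex.ofReal_re (‖_‖ ^ 2), hconj, map_sum, sum_mul_sum, Complex.re_sum]
  simp only [eC_mul_conj, Complex.re_sum]
  simp only [eC_eq_exp, Complex.exp_ofReal_mul_I_re]

lemma norm_sq_sum_eC_le (g : ℕ) (x : ℕ → ℝ) :
    ‖∑ d ∈ range g, eC (x d)‖ ^ 2 ≤ g ^ 2 - 16 * spread g x := by
  rw [norm_sq_sum_eC]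
  calc ∑ m ∈ range g, ∑ n ∈ range g, cos (2 * π * (x m - x n))
      ≤ ∑ m ∈ range g, ∑ n ∈ range g, (1 - 8 * nint (x m - x n) ^ 2) :=
        sum_le_sum fun m _ => sum_le_sum fun n _ => cos_two_pi_mul_le _
    _ = g ^ 2 - 8 * ∑ m ∈ range g, ∑ n ∈ range g, nint (x m - x n) ^ 2 := by
        simp only [sum_sub_distrib, ← mul_sum, sum_const, card_range, nsmul_eq_mul]
        ring
    _ = g ^ 2 - 16 * spread g x := by
        rw [sum_sum_nint_sq_eq_two_mul_spread]
        ring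

lemma norm_sum_eC_le_exp {g : ℕ} (hg : 0 < g) (x : ℕ → ℝ) :
    ‖∑ d ∈ range g, eC (x d)‖ ≤ g * exp (-(8 / (g : ℝ) ^ 2) * spread g x) := by
  have hg' : (0 : ℝ) < (g : ℝ) ^ 2 := by positivity
  refine le_of_pow_le_pow_left₀ two_ne_zero (by positivity) ?_
  calc ‖∑ d ∈ range g, eC (x d)‖ ^ 2 ≤ g ^ 2 - 16 * spread g x := norm_sq_sum_eC_le g x
    _ = g ^ 2 * (-(16 / (g : ℝ) ^ 2) * spread g x + 1) := by field_simp; ring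
    _ ≤ g ^ 2 * exp (-(16 / (g : ℝ) ^ 2) * spread g x) := by gcongr; exact add_one_le_exp _
    _ = (g * exp (-(8 / (g : ℝ) ^ 2) * spread g x)) ^ 2 := by
        rw [mul_pow, ← exp_nat_mul]; ring_nf

end ExponentialSums

section Digits

lemma eps_add_mul_zero {g a : ℕ} (ha : a < g) (m : ℕ) : eps g (a + g * m) 0 = a := by
  simp [eps, Nat.mod_eq_of_lt ha]

lemma eps_add_mul_succ {g a : ℕ} (ha : a < g) (m i : ℕ) :
    eps g (a + g * m) (i + 1) = eps g m i := by
  rw [eps, eps, pow_succ', ← Nat.div_div_eq_div_mul,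
    Nat.add_mul_div_left _ _ (by omega), Nat.div_eq_of_lt ha, zero_add]

lemma sum_eps_mul_pow (g n lam : ℕ) : ∑ i ∈ range lam, eps g n i * g ^ i = n % g ^ lam := by
  induction lam with
  | zero => simp [Nat.mod_one]
  | succ lam ih => rw [sum_range_succ, ih, Nat.mod_pow_succ, eps, mul_comm]

lemma sum_range_mul_eq_sum_sum {M : Type*} [AddCommMonoid M] (N g : ℕ) (f : ℕ → M) :
    ∑ k ∈ range (N * g), f k = ∑ m ∈ range N, ∑ a ∈ range g, f (a + g * m) := by
  rw [sum_range, ← Fintype.sum_equiv finProdFinEquiv _ _ (fun _ => rfl), Fintype.sum_prod_type]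
  simp [sum_range, finProdFinEquiv]

lemma sum_range_pow_prod_eps {M : Type*} [CommSemiring M] (g lam : ℕ) (h : ℕ → ℕ → M) :
    ∑ n ∈ range (g ^ lam), ∏ i ∈ range lam, h i (eps g n i)
      = ∏ i ∈ range lam, ∑ d ∈ range g, h i d := by
  induction lam generalizing h with
  | zero => simp
  | succ lam ih =>
    have hsplit : ∀ m, ∀ a ∈ range g, ∏ i ∈ range (lam + 1), h i (eps g (a + g * m) i)
        = (∏ i ∈ range lam, h (i + 1) (eps g m i)) * h 0 a := fun m a ha => by
      rw [prod_range_succ', eps_add_mul_zero (mem_range.1 ha)]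
      simp only [eps_add_mul_succ (mem_range.1 ha)]
    rw [pow_succ, sum_range_mul_eq_sum_sum, prod_range_succ', ← ih (fun i => h (i + 1)),
      sum_mul_sum]
    exact sum_congr rfl fun m _ => sum_congr rfl (hsplit m)

end Digits

section ExponentialSumFactorization

/-- The phase with which the digit `d` in position `i` enters `F_λ^{[j]}(β)`. -/
noncomputable def digitPhase (g : ℕ) (α : ℕ → ℕ → ℝ) (j : ℕ) (β : ℝ) (i d : ℕ) : ℝ :=
  α (i + j) d - β * (g : ℝ) ^ i * d

lemma F_eq_prod (g : ℕ) (α : ℕ → ℕ → ℝ) (lam j : ℕ) (β : ℝ) :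
    F g α lam j β = ∏ i ∈ range lam, ((g : ℂ)⁻¹ * ∑ d ∈ range g, eC (digitPhase g α j β i d)) := by
  rw [F, prod_mul_distrib, prod_const, card_range, inv_pow, ← sum_range_pow_prod_eps]
  congr 1
  refine sum_congr rfl fun n hn => ?_
  have hdigits : (n : ℝ) = ∑ i ∈ range lam, (eps g n i : ℝ) * (g : ℝ) ^ i := by
    exact_mod_cast ((sum_eps_mul_pow g n lam).trans (Nat.mod_eq_of_lt (mem_range.1 hn))).symm
  rw [← eC_sum, wdf, hdigits, mul_sum, ← sum_sub_distrib]
  simp only [digitPhase, mul_assoc, mul_comm ((g : ℝ) ^ _)]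

lemma norm_F_le_exp {g : ℕ} (hg : 0 < g) (α : ℕ → ℕ → ℝ) (lam j : ℕ) (β : ℝ) :
    ‖F g α lam j β‖
      ≤ exp (-(8 / (g : ℝ) ^ 2) * ∑ i ∈ range lam, spread g (digitPhase g α j β i)) := by
  rw [F_eq_prod, norm_prod, mul_sum, exp_sum]
  refine prod_le_prod (fun i _ => norm_nonneg _) fun i _ => ?_
  rw [norm_mul, norm_inv, Complex.norm_natCast, inv_mul_le_iff₀ (by exact_mod_cast hg)]
  exact norm_sum_eC_le_exp hg _

end ExponentialSumFactorization

section GammaBounds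

noncomputable def gamCoeff (g : ℕ) : ℝ := 2 * log 2 / (((g : ℝ) - 1) * (g : ℝ) ^ 4 * log g ^ 2)

lemma gam_eq_gamCoeff_mul_spread (g : ℕ) (α : ℕ → ℕ → ℝ) (i j : ℕ) :
    gam g α i j = gamCoeff g * spread g (fun d => g * α (i + j) d - α (i + j + 1) d) := rfl

lemma gamCoeff_nonneg {g : ℕ} (hg : 1 ≤ g) : 0 ≤ gamCoeff g := by
  have hg' : (1 : ℝ) ≤ g := by exact_mod_cast hg
  have hlog := log_nonneg hg'
  have hg1 : 0 ≤ (g : ℝ) - 1 := by linarith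
  unfold gamCoeff
  positivity

lemma gamCoeff_mul_log_le {g : ℕ} (hg : 2 ≤ g) : gamCoeff g * log g ≤ 2 / (g : ℝ) ^ 4 := by
  have hg' : (2 : ℝ) ≤ g := by exact_mod_cast hg
  have hlog : 0 < log g := log_pos (by linarith)
  have hlog2 : log 2 ≤ (g - 1) * log g := by
    nlinarith [log_le_log two_pos hg']
  have hg1 : (0 : ℝ) < g - 1 := by linarith
  rw [gamCoeff, div_mul_eq_mul_div, div_le_div_iff₀ (by positivity) (by positivity)]
  nlinarith [mul_le_mul_of_nonneg_left hlog2 (by positivity : (0 : ℝ) ≤ 2 * (g : ℝ) ^ 4 * log g)]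

lemma gam_le_one_div_twenty {g : ℕ} (hg : 2 ≤ g) (α : ℕ → ℕ → ℝ) (i j : ℕ) :
    gam g α i j ≤ 1 / 20 := by
  have hg' : (2 : ℝ) ≤ g := by exact_mod_cast hg
  have hlog2 : 0.6931471803 < log 2 := log_two_gt_d9
  have hlog : log 2 ≤ log g := log_le_log two_pos hg'
  have hlog_pos : 0 < log g := by linarith
  rw [gam_eq_gamCoeff_mul_spread]
  calc gamCoeff g * spread g _ ≤ gamCoeff g * (g * (g - 1) / 8) :=
        mul_le_mul_of_nonneg_left (spread_le _ _) (gamCoeff_nonneg (by omega))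
    _ = log 2 / (4 * (g : ℝ) ^ 3 * log g ^ 2) := by
        rw [gamCoeff]
        field_simp [show (g : ℝ) - 1 ≠ 0 by linarith]
        ring
    _ ≤ 1 / 20 := by
        rw [div_le_div_iff₀ (by positivity) (by norm_num)]
        nlinarith [pow_le_pow_left₀ (by norm_num) hg' 3, pow_le_pow_left₀ (by positivity) hlog 2]

/-- The `β`-dependence cancels: `g · φ_i(d) - φ_{i+1}(d)` is exactly the quantity inside `γ_i`. -/
lemma gam_le_spread_digitPhase {g : ℕ} (hg : 1 ≤ g) (α : ℕ → ℕ → ℝ) (i j : ℕ) (β : ℝ) :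
    gam g α i j ≤ 2 * g ^ 2 * gamCoeff g *
      (spread g (digitPhase g α j β i) + spread g (digitPhase g α j β (i + 1))) := by
  have hphase : (fun d => g * α (i + j) d - α (i + j + 1) d)
      = fun d => g * digitPhase g α j β i d - digitPhase g α j β (i + 1) d := by
    ext d
    rw [digitPhase, digitPhase, add_right_comm i 1 j]
    ring
  rw [gam_eq_gamCoeff_mul_spread, hphase, mul_comm _ (gamCoeff g), mul_assoc]
  exact mul_le_mul_of_nonneg_left (spread_natCast_mul_sub_le g hg _ _) (gamCoeff_nonneg hg)

lemma sum_range_add_succ_le {s : ℕ → ℝ} (hs : ∀ i, 0 ≤ s i) (n : ℕ) :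
    ∑ i ∈ range n, (s i + s (i + 1)) ≤ 2 * ∑ i ∈ range (n + 1), s i := by
  have h₁ := sum_range_succ s n
  have h₂ := sum_range_succ' s n
  rw [sum_add_distrib]
  linarith [hs 0, hs n]

/-- Only the last `γ_{λ-1}` involves the unconstrained `α_{λ+j}`; it is bounded by `1/20`. -/
lemma sig_le (g : ℕ) (hg : 2 ≤ g) (α : ℕ → ℕ → ℝ) (lam j : ℕ) (β : ℝ) :
    sig g α lam j
      ≤ 1 / 20 + 4 * g ^ 2 * gamCoeff g * ∑ i ∈ range lam, spread g (digitPhase g α j β i) := by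
  rcases lam with _ | n
  · simp [sig]
  have hS := sum_range_add_succ_le (fun i => spread_nonneg g (digitPhase g α j β i)) n
  have hK : 0 ≤ 2 * (g : ℝ) ^ 2 * gamCoeff g := by
    have := gamCoeff_nonneg (by omega : 1 ≤ g); positivity
  calc sig g α (n + 1) j = ∑ i ∈ range n, gam g α i j + gam g α n j := sum_range_succ _ _
    _ ≤ ∑ i ∈ range n, 2 * g ^ 2 * gamCoeff g *
          (spread g (digitPhase g α j β i) + spread g (digitPhase g α j β (i + 1))) + 1 / 20 :=
        add_le_add (sum_le_sum fun i _ => gam_le_spread_digitPhase (by omega) α i j β)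
          (gam_le_one_div_twenty hg α n j)
    _ ≤ 1 / 20 + 4 * g ^ 2 * gamCoeff g *
          ∑ i ∈ range (n + 1), spread g (digitPhase g α j β i) := by
        rw [← mul_sum]
        nlinarith [mul_le_mul_of_nonneg_left hS hK]

lemma sig_sub_mul_log_le (g : ℕ) (hg : 2 ≤ g) (α : ℕ → ℕ → ℝ) (lam j : ℕ) (β : ℝ) :
    (sig g α lam j - 1 / 20) * log g
      ≤ 8 / (g : ℝ) ^ 2 * ∑ i ∈ range lam, spread g (digitPhase g α j β i) := by
  set S := ∑ i ∈ range lam, spread g (digitPhase g α j β i)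
  have hS : 0 ≤ S := sum_nonneg fun i _ => spread_nonneg g _
  have hg' : (2 : ℝ) ≤ g := by exact_mod_cast hg
  have hlog : 0 ≤ log g := log_nonneg (by linarith)
  calc (sig g α lam j - 1 / 20) * log g ≤ (4 * g ^ 2 * gamCoeff g * S) * log g := by
        gcongr
        linarith [sig_le g hg α lam j β]
    _ = 4 * g ^ 2 * S * (gamCoeff g * log g) := by ring
    _ ≤ 4 * g ^ 2 * S * (2 / (g : ℝ) ^ 4) := by gcongr; exact gamCoeff_mul_log_le hg
    _ = 8 / (g : ℝ) ^ 2 * S := by field_simp; ring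

end GammaBounds

theorem L_infty_bound (g : ℕ) (hg : 2 ≤ g) (α : ℕ → ℕ → ℝ) (lam j : ℕ) (β : ℝ) :
    ‖F g α lam j β‖ ≤ (g : ℝ) ^ ((1 : ℝ) / 20) * (g : ℝ) ^ (-(sig g α lam j)) := by
  have hg' : (0 : ℝ) < g := by exact_mod_cast (by omega : 0 < g)
  rw [← rpow_add hg', rpow_def_of_pos hg']
  refine (norm_F_le_exp (by omega) α lam j β).trans (exp_le_exp.2 ?_)
  linarith [sig_sub_mul_log_le g hg α lam j β]
end

section
/- Let g ≥ 2 and α ∈ ℝ \ ℤ. Set i₀ := ⌊log(g/((g+1)‖α‖)) / log g⌋. Then ‖g^{i₀} α‖ ≥ 1/(g+1), where ‖x‖ is the distance from x to the nearest integer. -/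
open Real

lemma nint_pos {x : ℝ} (hx : ∀ n : ℤ, x ≠ n) : 0 < nint x :=
  abs_pos.mpr (sub_ne_zero.mpr (hx (round x)))

lemma nint_le_half (x : ℝ) : nint x ≤ 1 / 2 := abs_sub_round x

lemma min_abs_one_sub_abs_le_abs_sub_intCast (t : ℝ) (n : ℤ) :
    min |t| (1 - |t|) ≤ |t - n| := by
  rcases eq_or_ne n 0 with rfl | hn
  · simp
  · have hn1 : (1 : ℝ) ≤ |(n : ℝ)| := by exact_mod_cast Int.one_le_abs hn
    have := abs_sub_abs_le_abs_sub (n : ℝ) t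
    rw [abs_sub_comm] at this
    exact (min_le_right _ _).trans (by linarith)

lemma min_le_nint_natCast_mul (m : ℕ) (y : ℝ) :
    min (m * nint y) (1 - m * nint y) ≤ nint (m * y) := by
  have hmδ : |(m : ℝ) * (y - round y)| = m * nint y := by
    rw [abs_mul, Nat.abs_cast]; rfl
  have hshift : (m : ℝ) * y - round ((m : ℝ) * y) =
      m * (y - round y) - ((round ((m : ℝ) * y) - m * round y : ℤ) : ℝ) := by
    push_cast; ring
  rw [← hmδ, nint, hshift]
  exact min_abs_one_sub_abs_le_abs_sub_intCast _ _

lemma pow_natFloor_logb_le {b x : ℝ} (hb : 1 < b) (hx : 1 ≤ x) : b ^ ⌊logb b x⌋₊ ≤ x := by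
  rw [← rpow_natCast, ← le_logb_iff_rpow_le hb (by linarith)]
  exact Nat.floor_le (logb_nonneg hb hx)

lemma lt_pow_natFloor_logb_add_one {b x : ℝ} (hb : 1 < b) (hx : 0 < x) :
    x < b ^ (⌊logb b x⌋₊ + 1) := by
  rw [← rpow_natCast, ← logb_lt_iff_lt_rpow hb hx]
  push_cast
  exact Nat.lt_floor_add_one _

theorem geometric_progression_mod1 (g : ℕ) (hg : 2 ≤ g) (α : ℝ) (hα : ∀ n : ℤ, α ≠ n) :
    1 / ((g : ℝ) + 1) ≤
      nint ((g : ℝ) ^ (⌊Real.log ((g : ℝ) / (((g : ℝ) + 1) * nint α)) / Real.log g⌋₊) * α) := by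
  set δ := nint α
  have hδ : 0 < δ := nint_pos hα
  have hδ_half : δ ≤ 1 / 2 := nint_le_half α
  have hg1 : (1 : ℝ) < g := by exact_mod_cast hg
  have hX : 1 ≤ (g : ℝ) / ((g + 1) * δ) := by
    rw [le_div_iff₀ (by positivity)]
    nlinarith
  rw [log_div_log]
  set N := ⌊logb g ((g : ℝ) / ((g + 1) * δ))⌋₊
  have hupper : (g : ℝ) ^ N * δ ≤ g / (g + 1) := by
    have := mul_le_mul_of_nonneg_right (pow_natFloor_logb_le hg1 hX) hδ.le
    rwa [div_mul_eq_mul_div, mul_div_mul_right _ _ hδ.ne'] at this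
  have hlower : 1 / ((g : ℝ) + 1) < g ^ N * δ := by
    have := lt_pow_natFloor_logb_add_one hg1 (zero_lt_one.trans_le hX)
    rw [div_lt_iff₀ (by positivity), pow_succ] at this
    rw [div_lt_iff₀ (by positivity)]
    nlinarith
  have hmin := min_le_nint_natCast_mul (g ^ N) α
  push_cast at hmin
  have hcompl : 1 - (g : ℝ) / (g + 1) = 1 / (g + 1) := by field_simp; ring
  exact (le_min hlower.le (by linarith)).trans hmin
end
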